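/- For every n ∈ ℕ, c_n(1) = (1/n!) · Σ_{k=0}^{n} 2^{2k}·((2n)!/((2n−2k)!))·π^{2(n−k)}·|E_{2(n−k)}|. -/

import Mathlib

open MeasureTheory Real

/-- `c_n(ρ) = (1/(2π·n!)) ∫ ln(1+ρ·e^z)·z^{2n}·e^{−z/2} dz`. -/
noncomputable def cCoef (n : ℕ) (ρ : ℝ) : ℝ :=
  (1 / (2 * Real.pi * n.factorial)) *
    ∫ z : ℝ, Real.log (1 + ρ * Real.exp z) * z ^ (2 * n) * Real.exp (-z / 2)

/-- `|E_{2j}|`, the absolute value of the Euler numbers, characterized by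
`∫ u^{2j}/cosh(u) du = 2·(π/2)^{2j+1}·|E_{2j}|`. -/
noncomputable def absEuler (j : ℕ) : ℝ :=
  (∫ u : ℝ, u ^ (2 * j) / Real.cosh u) / (2 * (Real.pi / 2) ^ (2 * j + 1))

/-!
With `L(z) = log (1 + e^z)`, one has `(e^{-z/2} L(z))' = -e^{-z/2} L(z) / 2 + 1 / (2 cosh (z/2))`,
so integrating `(e^{-z/2} L(z) z^m)'` over `ℝ` gives `F m = G m + 2 m F (m - 1)` for
`F m = ∫ L(z) z^m e^{-z/2}` and `G m = ∫ z^m / cosh (z/2)`. The odd `G m` vanish, the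
substitution `z = 2u` gives `G (2j) = 2π^{2j+1} |E_{2j}|`, and unrolling the recurrence two steps
at a time expresses `c_n(1) = F (2n) / (2π n!)` through these values.
-/

open Filter Topology Set

theorem integrable_of_integrableOn_Ioi_of_even {E : Type*} [NormedAddCommGroup E] {f : ℝ → E}
    (hf : IntegrableOn f (Ioi 0)) (heven : ∀ x, f (-x) = f x) : Integrable f := by
  have hneg : MeasurableEmbedding fun x : ℝ => -x := (Homeomorph.neg ℝ).measurableEmbedding
  have hIic : IntegrableOn f (Iic 0) := by
    rw [← Measure.map_neg_eq_self (volume : Measure ℝ), hneg.integrableOn_map_iff,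
      show (fun x : ℝ => -x) ⁻¹' Iic 0 = Ici 0 by ext; simp]
    exact (Iff.mpr integrableOn_Ici_iff_integrableOn_Ioi hf).congr_fun (fun x _ => (heven x).symm)
      measurableSet_Ici
  simpa [Iic_union_Ioi] using hIic.union hf

theorem integrable_abs_pow_mul_exp_neg_mul_abs (k : ℕ) {b : ℝ} (hb : 0 < b) :
    Integrable fun x : ℝ => |x| ^ k * exp (-b * |x|) := by
  refine integrable_of_integrableOn_Ioi_of_even ?_ (fun x => by rw [abs_neg])
  refine (integrableOn_rpow_mul_exp_neg_mul_rpow (p := 1) (s := k)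
    (by linarith [k.cast_nonneg (α := ℝ)]) one_pos hb).congr_fun (fun x (hx : 0 < x) => ?_)
    measurableSet_Ioi
  simp [abs_of_pos hx]

theorem tendsto_abs_pow_mul_exp_neg_mul_abs_cocompact (k : ℕ) {b : ℝ} (hb : 0 < b) :
    Tendsto (fun x : ℝ => |x| ^ k * exp (-b * |x|)) (cocompact ℝ) (𝓝 0) := by
  simpa [Function.comp_def] using (tendsto_rpow_mul_exp_neg_mul_atTop_nhds_zero k b hb).comp
    (tendsto_norm_cocompact_atTop (E := ℝ))

theorem integral_eq_zero_of_odd {f : ℝ → ℝ} (hodd : ∀ x, f (-x) = -f x) :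
    ∫ x, f x = 0 := by
  have h := integral_neg_eq_self f volume
  simp only [hodd, integral_neg] at h
  linarith

theorem exp_abs_le_two_mul_cosh (x : ℝ) : exp |x| ≤ 2 * cosh x := by
  rw [← cosh_abs, cosh_eq]
  linarith [exp_pos (-|x|)]

theorem log_one_add_exp_nonneg (z : ℝ) : 0 ≤ log (1 + exp z) :=
  log_nonneg (by linarith [exp_pos z])

theorem log_one_add_exp_le_exp (z : ℝ) : log (1 + exp z) ≤ exp z := by
  linarith [log_le_sub_one_of_pos (x := 1 + exp z) (by positivity)]

theorem log_one_add_exp_eq_add (z : ℝ) : log (1 + exp z) = z + log (1 + exp (-z)) := by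
  have h : 1 + exp z = exp z * (1 + exp (-z)) := by
    rw [mul_add, mul_one, ← exp_add, add_neg_cancel, exp_zero, add_comm]
  rw [h, log_mul (by positivity) (by positivity), log_exp]

theorem log_one_add_exp_mul_exp_neg_half_le (z : ℝ) :
    log (1 + exp z) * exp (-z / 2) ≤ (|z| + 1) * exp (-(1 / 2) * |z|) := by
  rcases le_total z 0 with hz | hz
  · calc log (1 + exp z) * exp (-z / 2) ≤ exp z * exp (-z / 2) := by
          gcongr; exact log_one_add_exp_le_exp z
      _ = exp (-(1 / 2) * |z|) := by rw [← exp_add, abs_of_nonpos hz]; ring_nf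
      _ ≤ (|z| + 1) * exp (-(1 / 2) * |z|) := by
          nlinarith [abs_nonneg z, exp_pos (-(1 / 2) * |z|)]
  · rw [abs_of_nonneg hz, log_one_add_exp_eq_add, show -z / 2 = -(1 / 2) * z by ring]
    gcongr
    linarith [log_one_add_exp_le_exp (-z), exp_le_one_iff.2 (neg_nonpos.2 hz)]

theorem exp_div_one_add_exp_mul_exp_neg_half (z : ℝ) :
    exp z / (1 + exp z) * exp (-z / 2) = (2 * cosh (z / 2))⁻¹ := by
  have hz : exp z = exp (z / 2) * exp (z / 2) := by rw [← exp_add, add_halves]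
  have hneg : exp (-z / 2) = (exp (z / 2))⁻¹ := by rw [← exp_neg, neg_div]
  rw [cosh_eq, ← neg_div, hneg, hz]
  field_simp
  ring

noncomputable def softplusIntegrand (m : ℕ) (z : ℝ) : ℝ :=
  log (1 + exp z) * z ^ m * exp (-z / 2)

noncomputable def sechHalfIntegrand (m : ℕ) (z : ℝ) : ℝ := z ^ m / cosh (z / 2)

theorem abs_softplusIntegrand_le (m : ℕ) (z : ℝ) :
    |softplusIntegrand m z| ≤
      |z| ^ (m + 1) * exp (-(1 / 2) * |z|) + |z| ^ m * exp (-(1 / 2) * |z|) := by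
  have h : |softplusIntegrand m z| = log (1 + exp z) * exp (-z / 2) * |z| ^ m := by
    rw [softplusIntegrand, abs_mul, abs_mul, abs_of_nonneg (log_one_add_exp_nonneg z),
      abs_of_pos (exp_pos _), abs_pow]
    ring
  rw [h]
  calc log (1 + exp z) * exp (-z / 2) * |z| ^ m ≤ (|z| + 1) * exp (-(1 / 2) * |z|) * |z| ^ m := by
        gcongr ?_ * _; exact log_one_add_exp_mul_exp_neg_half_le z
    _ = _ := by ring

theorem abs_sechHalfIntegrand_le (m : ℕ) (z : ℝ) :
    |sechHalfIntegrand m z| ≤ 2 * (|z| ^ m * exp (-(1 / 2) * |z|)) := by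
  have hcosh : exp (|z / 2|) ≤ 2 * cosh (z / 2) := exp_abs_le_two_mul_cosh (z / 2)
  have hexp : exp (-(1 / 2) * |z|) * exp (|z / 2|) = 1 := by
    rw [← exp_add, abs_div, abs_two]; ring_nf; exact exp_zero
  rw [sechHalfIntegrand, abs_div, abs_pow, abs_of_pos (cosh_pos _), div_le_iff₀ (cosh_pos _)]
  calc |z| ^ m = |z| ^ m * exp (-(1 / 2) * |z|) * exp (|z / 2|) := by rw [mul_assoc, hexp, mul_one]
    _ ≤ |z| ^ m * exp (-(1 / 2) * |z|) * (2 * cosh (z / 2)) := by gcongr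
    _ = _ := by ring

theorem integrable_softplusIntegrand (m : ℕ) : Integrable (softplusIntegrand m) := by
  refine ((integrable_abs_pow_mul_exp_neg_mul_abs (m + 1) one_half_pos).add
    (integrable_abs_pow_mul_exp_neg_mul_abs m one_half_pos)).mono' ?_
    (Eventually.of_forall (abs_softplusIntegrand_le m))
  exact Measurable.aestronglyMeasurable (by unfold softplusIntegrand; fun_prop)

theorem integrable_sechHalfIntegrand (m : ℕ) : Integrable (sechHalfIntegrand m) := by
  refine ((integrable_abs_pow_mul_exp_neg_mul_abs m one_half_pos).const_mul 2).mono' ?_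
    (Eventually.of_forall (abs_sechHalfIntegrand_le m))
  exact Measurable.aestronglyMeasurable (by unfold sechHalfIntegrand; fun_prop)

theorem tendsto_softplusIntegrand_cocompact (m : ℕ) :
    Tendsto (softplusIntegrand m) (cocompact ℝ) (𝓝 0) := by
  refine squeeze_zero_norm (abs_softplusIntegrand_le m) ?_
  simpa using (tendsto_abs_pow_mul_exp_neg_mul_abs_cocompact (m + 1) one_half_pos).add
    (tendsto_abs_pow_mul_exp_neg_mul_abs_cocompact m one_half_pos)

theorem hasDerivAt_softplusIntegrand (m : ℕ) (z : ℝ) :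
    HasDerivAt (softplusIntegrand m)
      ((sechHalfIntegrand m z - softplusIntegrand m z) / 2 + m * softplusIntegrand (m - 1) z)
      z := by
  have hlog : HasDerivAt (fun z => log (1 + exp z)) (exp z / (1 + exp z)) z := by
    simpa using ((hasDerivAt_exp z).const_add 1).log (by positivity)
  have hexp : HasDerivAt (fun z : ℝ => exp (-z / 2)) (exp (-z / 2) * (-1 / 2)) z := by
    simpa using ((hasDerivAt_neg z).div_const 2).exp
  refine ((hlog.mul (hasDerivAt_pow m z)).mul hexp).congr_deriv ?_
  have hsech : (cosh (z / 2))⁻¹ = 2 * (exp z / (1 + exp z) * exp (-z / 2)) := by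
    rw [exp_div_one_add_exp_mul_exp_neg_half, mul_inv, ← mul_assoc, mul_inv_cancel₀ two_ne_zero,
      one_mul]
  rw [sechHalfIntegrand, softplusIntegrand, softplusIntegrand, div_eq_mul_inv _ (cosh _), hsech,
    Pi.mul_apply]
  ring

-- At `m = 0` the truncated `m - 1` is harmless: its term carries the factor `m`.
theorem integral_softplusIntegrand (m : ℕ) :
    ∫ z, softplusIntegrand m z =
      (∫ z, sechHalfIntegrand m z) + 2 * m * ∫ z, softplusIntegrand (m - 1) z := by
  have hdiff : Integrable fun z => sechHalfIntegrand m z - softplusIntegrand m z :=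
    (integrable_sechHalfIntegrand m).sub (integrable_softplusIntegrand m)
  have hlower := (integrable_softplusIntegrand (m - 1)).const_mul (m : ℝ)
  have hzero := integral_of_hasDerivAt_of_tendsto (hasDerivAt_softplusIntegrand m)
    (hdiff.div_const 2 |>.add hlower)
    ((tendsto_softplusIntegrand_cocompact m).mono_left atBot_le_cocompact)
    ((tendsto_softplusIntegrand_cocompact m).mono_left atTop_le_cocompact)
  rw [integral_add (hdiff.div_const 2) hlower, integral_div,
    integral_sub (integrable_sechHalfIntegrand m) (integrable_softplusIntegrand m),
    integral_const_mul, sub_zero] at hzero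
  linear_combination -2 * hzero

theorem integral_sechHalfIntegrand_of_odd {m : ℕ} (hm : Odd m) :
    ∫ z, sechHalfIntegrand m z = 0 :=
  integral_eq_zero_of_odd fun z => by
    rw [sechHalfIntegrand, sechHalfIntegrand, hm.neg_pow, neg_div, neg_div, cosh_neg]

theorem integral_sechHalfIntegrand_two_mul (j : ℕ) :
    ∫ z, sechHalfIntegrand (2 * j) z = 2 * π ^ (2 * j + 1) * absEuler j := by
  have hscale := Measure.integral_comp_div (fun u : ℝ => (2 * u) ^ (2 * j) / cosh u) 2
  simp only [mul_div_cancel₀ _ (two_ne_zero' ℝ), mul_pow, mul_div_assoc, integral_const_mul,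
    abs_two, smul_eq_mul] at hscale
  simp only [sechHalfIntegrand]
  rw [hscale, absEuler, div_pow]
  field_simp
  ring

theorem eq_sum_of_recurrence {R : Type*} [CommSemiring R] {a b : ℕ → R}
    (hrec : ∀ m, a m = b m + 2 * m * a (m - 1)) (hodd : ∀ j, b (2 * j + 1) = 0) (n : ℕ) :
    a (2 * n) = ∑ k ∈ Finset.range (n + 1),
      4 ^ k * ((2 * n).descFactorial (2 * k) : R) * b (2 * (n - k)) := by
  induction n with
  | zero => simpa using hrec 0
  | succ n ih =>
    have hstep : a (2 * (n + 1)) = b (2 * (n + 1)) +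
        4 * ((2 * n + 2) * (2 * n + 1) : ℕ) * a (2 * n) := by
      rw [hrec, show 2 * (n + 1) - 1 = 2 * n + 1 by omega, hrec (2 * n + 1), hodd,
        Nat.add_sub_cancel]
      push_cast
      ring
    rw [hstep, ih, Finset.sum_range_succ' _ (n + 1), Finset.mul_sum, add_comm]
    congr 1
    · refine Finset.sum_congr rfl fun k _ => ?_
      rw [show 2 * (n + 1) = 2 * n + 1 + 1 by ring, show 2 * (k + 1) = 2 * k + 1 + 1 by ring,
        Nat.succ_descFactorial_succ, Nat.succ_descFactorial_succ, Nat.add_sub_add_right]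
      push_cast
      ring
    · simp

/-- `c_n(1) = (1/n!) Σ_{k=0}^{n} 2^{2k}·((2n)!/((2n−2k)!))·π^{2(n−k)}·|E_{2(n−k)}|`. -/
theorem stmt8 (n : ℕ) :
    cCoef n 1 = (1 / (n.factorial : ℝ)) *
      ∑ k ∈ Finset.range (n + 1),
        (2 : ℝ) ^ (2 * k) * ((2 * n).descFactorial (2 * k) : ℝ)
          * Real.pi ^ (2 * (n - k)) * absEuler (n - k) := by
  have hc : cCoef n 1 = 1 / (2 * π * n.factorial) * ∫ z, softplusIntegrand (2 * n) z := by
    simp only [cCoef, one_mul, softplusIntegrand]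
  have hsum := eq_sum_of_recurrence (a := fun m => ∫ z, softplusIntegrand m z)
    integral_softplusIntegrand
    (fun j => integral_sechHalfIntegrand_of_odd (odd_two_mul_add_one j)) n
  simp only [integral_sechHalfIntegrand_two_mul] at hsum
  rw [hc, hsum, Finset.mul_sum, Finset.mul_sum]
  refine Finset.sum_congr rfl fun k _ => ?_
  rw [pow_mul]
  field_simp
  ring
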